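/- Let G, H, K be pro-oligomorphic groups, and assume G is split, meaning: for every pro-oligomorphic group H′, every transitive object of S(G × H′) is isomorphic to X × Y for some transitive G-set X and transitive H′-set Y. Let Φ : S(G) → S(K) and Ψ : S(H) → S(K) be exact functors such that Φ(X) × Ψ(Y) is a transitive K-set whenever X ∈ S(G) and Y ∈ S(H) are transitive. Let X be a transitive G-set, Y a transitive H-set, and Z an object of S(K) admitting a surjective morphism Φ(X) × Ψ(Y) → Z. Then there exist a G-set X′ with a surjective morphism X → X′ in S(G), an H-set Y′ with a surjective morphism Y → Y′ in S(H), and an isomorphism Z ≅ Φ(X′) × Ψ(Y′) in S(K). -/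

import Mathlib

open CategoryTheory

/-- A finitary smooth `G`-set for a topological group `G`: a `G`-action such that every
point stabilizer is open and there are finitely many orbits. -/
structure SmGSet (G : Type) [Group G] [TopologicalSpace G] : Type 1 where
  /-- the underlying set -/
  α : Type
  /-- the action -/
  smul : G → α → α
  one_smul : ∀ x, smul 1 x = x
  mul_smul : ∀ g h x, smul (g * h) x = smul g (smul h x)
  /-- smoothness: every point stabilizer is an open subgroup -/
  smooth : ∀ x : α, IsOpen {g : G | smul g x = x}
  /-- finitarity: there are finitely many orbits -/
  finitary : Finite (Quot fun x y : α => ∃ g : G, smul g x = y)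

namespace SmGSet

variable {G : Type} [Group G] [TopologicalSpace G]

/-- Morphisms of `G`-sets: equivariant maps. -/
@[ext]
structure SmHom (X Y : SmGSet G) where
  toFun : X.α → Y.α
  equivariant : ∀ (g : G) (x : X.α), toFun (X.smul g x) = Y.smul g (toFun x)

/-- The category `S(G)` of finitary smooth `G`-sets. -/
instance : Category (SmGSet G) where
  Hom := SmHom
  id X := ⟨fun x => x, fun _ _ => rfl⟩
  comp f g := ⟨fun x => g.toFun (f.toFun x), fun a x => by
    try dsimp only
    rw [f.equivariant, g.equivariant]⟩

/-- A `G`-set is transitive if it is nonempty and has a single orbit. -/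
def IsTransitive (X : SmGSet G) : Prop :=
  Nonempty X.α ∧ ∀ x y : X.α, ∃ g : G, X.smul g x = y

/-- The orbit equivalence relation is an equivalence. -/
theorem orbRel_equiv (X : SmGSet G) :
    Equivalence fun x y : X.α => ∃ g : G, X.smul g x = y := by
  constructor
  · intro x; exact ⟨1, X.one_smul x⟩
  · rintro x y ⟨g, rfl⟩
    exact ⟨g⁻¹, by rw [← X.mul_smul, inv_mul_cancel, X.one_smul]⟩
  · rintro x y z ⟨g, rfl⟩ ⟨h, rfl⟩
    exact ⟨h * g, X.mul_smul h g x⟩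

/-- A finitary `G`-set admits a finite orbit transversal. -/
theorem exists_transversal (X : SmGSet G) :
    ∃ S : Set X.α, S.Finite ∧ ∀ x : X.α, ∃ s ∈ S, ∃ g : G, X.smul g s = x := by
  haveI := X.finitary
  refine ⟨Set.range (fun q : Quot fun x y : X.α => ∃ g : G, X.smul g x = y => q.out),
    Set.finite_range _, fun x => ?_⟩
  refine ⟨(Quot.mk _ x).out, ⟨_, rfl⟩, ?_⟩
  have h : Quot.mk _ (Quot.mk (fun x y : X.α => ∃ g : G, X.smul g x = y) x).out
      = Quot.mk _ x := Quot.out_eq _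
  exact (X.orbRel_equiv.eqvGen_iff).mp (Quot.eq.mp h)

/-- The stabilizer of a point, as a subgroup. -/
def stab (X : SmGSet G) (x : X.α) : Subgroup G where
  carrier := {g | X.smul g x = x}
  one_mem' := X.one_smul x
  mul_mem' := by
    intro a b ha hb
    simp only [Set.mem_setOf_eq] at *
    rw [X.mul_smul, hb, ha]
  inv_mem' := by
    intro a ha
    simp only [Set.mem_setOf_eq] at *
    have h : X.smul a⁻¹ (X.smul a x) = x := by
      rw [← X.mul_smul, inv_mul_cancel, X.one_smul]
    rwa [ha] at h

theorem stab_isOpen (X : SmGSet G) (x : X.α) : IsOpen ((X.stab x : Subgroup G) : Set G) :=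
  X.smooth x

end SmGSet

namespace SmGSet

variable {G : Type} [Group G] [TopologicalSpace G]

/-- The external product of a `G`-set and an `H`-set, as a `(G × H)`-set. -/
def eprod {H : Type} [Group H] [TopologicalSpace H]
    (X : SmGSet G) (Y : SmGSet H) : SmGSet (G × H) where
  α := X.α × Y.α
  smul p q := (X.smul p.1 q.1, Y.smul p.2 q.2)
  one_smul q := by
    have h1 : X.smul 1 q.1 = q.1 := X.one_smul q.1
    have h2 : Y.smul 1 q.2 = q.2 := Y.one_smul q.2
    simp [h1, h2]
  mul_smul p p' q := by
    have h1 : X.smul (p.1 * p'.1) q.1 = X.smul p.1 (X.smul p'.1 q.1) := X.mul_smul _ _ _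
    have h2 : Y.smul (p.2 * p'.2) q.2 = Y.smul p.2 (Y.smul p'.2 q.2) := Y.mul_smul _ _ _
    simp [Prod.mul_def, h1, h2]
  smooth q := by
    have h : {p : G × H | (X.smul p.1 q.1, Y.smul p.2 q.2) = q} =
        {g : G | X.smul g q.1 = q.1} ×ˢ {h : H | Y.smul h q.2 = q.2} := by
      ext p
      simp only [Set.mem_setOf_eq, Set.mem_prod, Prod.ext_iff]
    rw [h]
    exact (X.smooth q.1).prod (Y.smooth q.2)
  finitary := by
    obtain ⟨SX, hSXfin, hSX⟩ := X.exists_transversal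
    obtain ⟨SY, hSYfin, hSY⟩ := Y.exists_transversal
    haveI := hSXfin.to_subtype
    haveI := hSYfin.to_subtype
    refine Finite.of_surjective
      (fun w : SX × SY => Quot.mk _ ((w.1 : X.α), (w.2 : Y.α))) fun z => ?_
    obtain ⟨⟨x, y⟩, rfl⟩ := Quot.exists_rep z
    obtain ⟨s, hs, g, hg⟩ := hSX x
    obtain ⟨t, ht, h, hh⟩ := hSY y
    exact ⟨⟨⟨s, hs⟩, ⟨t, ht⟩⟩, Quot.sound ⟨(g, h), by simp [hg, hh]⟩⟩

/-- The (diagonal) product of two `G`-sets in `S(G)`, for `G` Roelcke precompact.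
This is the categorical product in `S(G)`, computed on underlying sets. -/
noncomputable def dprod (X Y : SmGSet G)
    (hroelcke : ∀ U V : Subgroup G, IsOpen (U : Set G) → IsOpen (V : Set G) →
      Finite (DoubleCoset.Quotient (U : Set G) (V : Set G))) : SmGSet G where
  α := X.α × Y.α
  smul g p := (X.smul g p.1, Y.smul g p.2)
  one_smul p := by
    have h1 : X.smul 1 p.1 = p.1 := X.one_smul p.1
    have h2 : Y.smul 1 p.2 = p.2 := Y.one_smul p.2
    simp [h1, h2]
  mul_smul g h p := by
    have h1 : X.smul (g * h) p.1 = X.smul g (X.smul h p.1) := X.mul_smul _ _ _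
    have h2 : Y.smul (g * h) p.2 = Y.smul g (Y.smul h p.2) := Y.mul_smul _ _ _
    simp [h1, h2]
  smooth p := by
    have h : {g : G | (X.smul g p.1, Y.smul g p.2) = p} =
        {g : G | X.smul g p.1 = p.1} ∩ {g : G | Y.smul g p.2 = p.2} := by
      ext g
      simp only [Set.mem_setOf_eq, Set.mem_inter_iff, Prod.ext_iff]
    rw [h]
    exact (X.smooth p.1).inter (Y.smooth p.2)
  finitary := by
    obtain ⟨SX, hSXfin, hSX⟩ := X.exists_transversal
    obtain ⟨SY, hSYfin, hSY⟩ := Y.exists_transversal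
    haveI := hSXfin.to_subtype
    haveI := hSYfin.to_subtype
    haveI : ∀ (s : SX) (t : SY),
        Finite (DoubleCoset.Quotient ((X.stab (s : X.α) : Subgroup G) : Set G)
          ((Y.stab (t : Y.α) : Subgroup G) : Set G)) :=
      fun s t => hroelcke _ _ (X.stab_isOpen _) (Y.stab_isOpen _)
    refine Finite.of_surjective
      (fun w : Σ (s : SX) (t : SY),
          DoubleCoset.Quotient ((X.stab (s : X.α) : Subgroup G) : Set G)
            ((Y.stab (t : Y.α) : Subgroup G) : Set G) =>
        Quot.mk _ ((w.1 : X.α), Y.smul w.2.2.out (w.2.1 : Y.α))) fun z => ?_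
    obtain ⟨⟨x, y⟩, rfl⟩ := Quot.exists_rep z
    obtain ⟨s, hs, g, hgx⟩ := hSX x
    obtain ⟨t, ht, h, hhy⟩ := hSY (Y.smul g⁻¹ y)
    refine ⟨⟨⟨s, hs⟩, ⟨t, ht⟩, DoubleCoset.mk (X.stab s) (Y.stab t) h⟩, ?_⟩
    set r := (DoubleCoset.mk (X.stab s) (Y.stab t) h).out with hr
    have hout : DoubleCoset.mk (X.stab s) (Y.stab t) r = DoubleCoset.mk (X.stab s) (Y.stab t) h := by
      rw [hr]; exact Quotient.out_eq' _
    obtain ⟨u, hu, v, hv, huv⟩ := DoubleCoset.rel_iff.mp (Quotient.eq''.mp hout)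
    have hu' : X.smul u s = s := hu
    have hv' : Y.smul v t = t := hv
    have hxs : X.smul (g * u) s = x := by
      rw [X.mul_smul, hu', hgx]
    have hys : Y.smul (g * u) (Y.smul r t) = y := by
      have hassoc : g * u * r * v = g * h := by rw [huv]; group
      calc Y.smul (g * u) (Y.smul r t)
          = Y.smul (g * u * r) t := (Y.mul_smul (g * u) r t).symm
        _ = Y.smul (g * u * r) (Y.smul v t) := by rw [hv']
        _ = Y.smul (g * u * r * v) t := (Y.mul_smul (g * u * r) v t).symm
        _ = Y.smul (g * h) t := by rw [hassoc]
        _ = Y.smul g (Y.smul h t) := Y.mul_smul g h t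
        _ = Y.smul g (Y.smul g⁻¹ y) := by rw [hhy]
        _ = y := by rw [← Y.mul_smul, mul_inv_cancel, Y.one_smul]
    exact Quot.sound ⟨g * u, by dsimp only; rw [hxs, hys]⟩

end SmGSet

/-- A topological group is pro-oligomorphic if it is Hausdorff, non-archimedean (open
subgroups form a neighborhood basis of the identity), and Roelcke precompact (`U\G/V`
is finite for all open subgroups `U`, `V`). -/
structure IsProOligomorphic (G : Type) [Group G] [TopologicalSpace G]
    [IsTopologicalGroup G] : Prop where
  t2 : T2Space G
  nonarch : ∀ s ∈ nhds (1 : G), ∃ U : Subgroup G, IsOpen (U : Set G) ∧ (U : Set G) ⊆ s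
  roelcke : ∀ U V : Subgroup G, IsOpen (U : Set G) → IsOpen (V : Set G) →
    Finite (DoubleCoset.Quotient (U : Set G) (V : Set G))

/-!
By exactness, `Φ X × Φ X ≅ Φ (X × X)` is the disjoint union of the pieces `Φ O`, `O` running over
the `G`-orbits of `X × X`, and likewise for `Ψ`. Each `Φ O × Ψ P` is transitive by hypothesis, so
the kernel of `f`, a `K`-invariant equivalence relation on `Φ X × Ψ Y`, is a union of such
products. Reading off which products occur gives a `G × H`-invariant equivalence relation on
`X × Y`: the diagonal orbit, the swap and the orbits of `X × X × X` give reflexivity, symmetry and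
transitivity. Since `G` is split, the quotient of `X × Y` by it is `X' × Y'` and the quotient map
is `p × q`. An exact functor cannot identify two maps that differ everywhere, so `Φ p` identifies
the two coordinates of a point of `Φ O` exactly when `p` does on `O`. Hence `f` and the surjection
`Φ p × Ψ q` have the same kernel, and `Z ≅ Φ X' × Ψ Y'`.
-/

abbrev RoelckePrecompact (G : Type) [Group G] [TopologicalSpace G] : Prop :=
  ∀ U V : Subgroup G, IsOpen (U : Set G) → IsOpen (V : Set G) →
    Finite (DoubleCoset.Quotient (U : Set G) (V : Set G))

namespace SmGSet

open Limits

variable {G : Type} [Group G] [TopologicalSpace G]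

section Basic

theorem inv_smul_smul (M : SmGSet G) (g : G) (x : M.α) : M.smul g⁻¹ (M.smul g x) = x := by
  rw [← M.mul_smul, inv_mul_cancel, M.one_smul]

theorem smul_injective (M : SmGSet G) (g : G) : Function.Injective (M.smul g) :=
  Function.LeftInverse.injective (M.inv_smul_smul g)

theorem bijective_hom {M N : SmGSet G} (e : M ≅ N) : Function.Bijective e.hom.toFun :=
  Function.bijective_iff_has_inverse.mpr ⟨e.inv.toFun,
    fun x => congrFun (congrArg SmHom.toFun e.hom_inv_id) x,
    fun y => congrFun (congrArg SmHom.toFun e.inv_hom_id) y⟩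

noncomputable def isoOfBijective {M N : SmGSet G} (f : M ⟶ N) (hf : Function.Bijective f.toFun) :
    M ≅ N where
  hom := f
  inv := ⟨(Equiv.ofBijective f.toFun hf).symm, fun g y => hf.1 <| by
    simp only [Equiv.ofBijective_apply_symm_apply, f.equivariant]⟩
  hom_inv_id := SmHom.ext <| funext (Equiv.ofBijective f.toFun hf).symm_apply_apply
  inv_hom_id := SmHom.ext <| funext (Equiv.ofBijective f.toFun hf).apply_symm_apply

theorem surjective_of_isTransitive {M N : SmGSet G} (f : M ⟶ N) (hM : Nonempty M.α)
    (hN : IsTransitive N) : Function.Surjective f.toFun := by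
  obtain ⟨x⟩ := hM
  intro y
  obtain ⟨g, hg⟩ := hN.2 (f.toFun x) y
  exact ⟨M.smul g x, (f.equivariant g x).trans hg⟩

theorem nonempty_iso_of_toFun_eq_iff {A Z B : SmGSet G} (f : A ⟶ Z)
    (hf : Function.Surjective f.toFun) (F : A ⟶ B) (hF : Function.Surjective F.toFun)
    (h : ∀ a b, f.toFun a = f.toFun b ↔ F.toFun a = F.toFun b) : Nonempty (Z ≅ B) := by
  choose s hs using hf
  have hFs : ∀ a, F.toFun (s (f.toFun a)) = F.toFun a := fun a => (h _ _).mp (hs _)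
  refine ⟨isoOfBijective ⟨fun z => F.toFun (s z), fun g z => ?_⟩ ⟨fun z z' hzz' => ?_, fun b => ?_⟩⟩
  · rw [← hs z, ← f.equivariant, hFs, hFs, F.equivariant]
  · rw [← hs z, ← hs z']
    exact (h _ _).mpr hzz'
  · obtain ⟨a, rfl⟩ := hF b
    exact ⟨f.toFun a, hFs a⟩

theorem toFun_eq_of_isTransitive {A B : SmGSet G} (hA : IsTransitive A) (u v : A ⟶ B) {a₀ : A.α}
    (h : u.toFun a₀ = v.toFun a₀) (a : A.α) : u.toFun a = v.toFun a := by
  obtain ⟨g, rfl⟩ := hA.2 a₀ a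
  rw [u.equivariant, v.equivariant, h]

end Basic

section Orbits

abbrev OrbitRel (M : SmGSet G) : M.α → M.α → Prop := fun x y => ∃ g : G, M.smul g x = y

abbrev Orbits (M : SmGSet G) : Type := Quot M.OrbitRel

instance (M : SmGSet G) : Finite M.Orbits := M.finitary

theorem orbit_mk_eq_iff (M : SmGSet G) {x y : M.α} :
    Quot.mk M.OrbitRel x = Quot.mk M.OrbitRel y ↔ ∃ g : G, M.smul g x = y :=
  ⟨fun h => (M.orbRel_equiv.eqvGen_iff).mp (Quot.eq.mp h), fun h => Quot.sound h⟩

def IsInvariant (M : SmGSet G) (A : Set M.α) : Prop :=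
  ∀ (g : G) (x : M.α), x ∈ A → M.smul g x ∈ A

def sub (M : SmGSet G) (A : Set M.α) (hA : M.IsInvariant A) : SmGSet G where
  α := A
  smul g x := ⟨M.smul g x.1, hA g x.1 x.2⟩
  one_smul x := Subtype.ext (M.one_smul x.1)
  mul_smul g h x := Subtype.ext (M.mul_smul g h x.1)
  smooth x := by
    simpa only [Subtype.ext_iff] using M.smooth x.1
  finitary := by
    refine Finite.of_injective (Quot.lift (fun x : A => Quot.mk M.OrbitRel x.1) ?_) ?_
    · rintro a b ⟨g, hg⟩
      exact Quot.sound ⟨g, congrArg Subtype.val hg⟩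
    · rintro ⟨a⟩ ⟨b⟩ hab
      obtain ⟨g, hg⟩ := M.orbit_mk_eq_iff.mp hab
      exact Quot.sound ⟨g, Subtype.ext hg⟩

def subι (M : SmGSet G) (A : Set M.α) (hA : M.IsInvariant A) : M.sub A hA ⟶ M :=
  ⟨Subtype.val, fun _ _ => rfl⟩

def orbitClass (M : SmGSet G) (i : M.Orbits) : Set M.α := {x | Quot.mk M.OrbitRel x = i}

theorem isInvariant_orbitClass (M : SmGSet G) (i : M.Orbits) : M.IsInvariant (M.orbitClass i) :=
  fun g x hx => (Quot.sound ⟨g, rfl⟩ : Quot.mk M.OrbitRel x = _).symm.trans hx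

theorem mem_orbitClass_mk (M : SmGSet G) {x y : M.α} :
    y ∈ M.orbitClass (Quot.mk _ x) ↔ ∃ g : G, M.smul g y = x :=
  M.orbit_mk_eq_iff

abbrev orbitObj (M : SmGSet G) (i : M.Orbits) : SmGSet G :=
  M.sub (M.orbitClass i) (M.isInvariant_orbitClass i)

abbrev orbitι (M : SmGSet G) (i : M.Orbits) : M.orbitObj i ⟶ M :=
  M.subι (M.orbitClass i) (M.isInvariant_orbitClass i)

theorem isTransitive_orbitObj (M : SmGSet G) (i : M.Orbits) : IsTransitive (M.orbitObj i) := by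
  obtain ⟨x, rfl⟩ := Quot.exists_rep i
  refine ⟨⟨⟨x, rfl⟩⟩, fun ⟨y, hy⟩ ⟨z, hz⟩ => ?_⟩
  obtain ⟨g, hg⟩ := M.orbit_mk_eq_iff.mp (hy.trans hz.symm)
  exact ⟨g, Subtype.ext hg⟩

end Orbits

section Products

variable (hr : RoelckePrecompact G)

def dprodFst (A B : SmGSet G) : dprod A B hr ⟶ A := ⟨Prod.fst, fun _ _ => rfl⟩

def dprodSnd (A B : SmGSet G) : dprod A B hr ⟶ B := ⟨Prod.snd, fun _ _ => rfl⟩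

def dprodLift {M A B : SmGSet G} (f : M ⟶ A) (g : M ⟶ B) : M ⟶ dprod A B hr :=
  ⟨fun x => (f.toFun x, g.toFun x), fun a x => Prod.ext (f.equivariant a x) (g.equivariant a x)⟩

def dprodMap {A A' B B' : SmGSet G} (f : A ⟶ A') (g : B ⟶ B') : dprod A B hr ⟶ dprod A' B' hr :=
  ⟨fun x => (f.toFun x.1, g.toFun x.2),
    fun a x => Prod.ext (f.equivariant a x.1) (g.equivariant a x.2)⟩

noncomputable def dprodCone (F : Discrete WalkingPair ⥤ SmGSet G) : Cone F where
  pt := dprod (F.obj ⟨WalkingPair.left⟩) (F.obj ⟨WalkingPair.right⟩) hr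
  π := Discrete.natTrans fun
    | ⟨WalkingPair.left⟩ => dprodFst hr _ _
    | ⟨WalkingPair.right⟩ => dprodSnd hr _ _

noncomputable def dprodConeIsLimit (F : Discrete WalkingPair ⥤ SmGSet G) :
    IsLimit (dprodCone hr F) where
  lift c := dprodLift hr (c.π.app ⟨WalkingPair.left⟩) (c.π.app ⟨WalkingPair.right⟩)
  fac _ j := by rcases j with ⟨_ | _⟩ <;> rfl
  uniq _ _ h := SmHom.ext <| funext fun x =>
    Prod.ext (congrFun (congrArg SmHom.toFun (h ⟨WalkingPair.left⟩)) x)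
      (congrFun (congrArg SmHom.toFun (h ⟨WalkingPair.right⟩)) x)

end Products

section Coproducts

variable {ι : Type} [Finite ι]

def sigma (F : ι → SmGSet G) : SmGSet G where
  α := Σ i, (F i).α
  smul g x := ⟨x.1, (F x.1).smul g x.2⟩
  one_smul x := congrArg (Sigma.mk x.1) ((F x.1).one_smul x.2)
  mul_smul g h x := congrArg (Sigma.mk x.1) ((F x.1).mul_smul g h x.2)
  smooth x := by
    simpa only [Sigma.ext_iff, heq_eq_eq, true_and] using (F x.1).smooth x.2
  finitary := by
    refine Finite.of_surjective (fun w : Σ i, (F i).Orbits => Quot.mk _ ⟨w.1, w.2.out⟩) ?_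
    rintro ⟨⟨i, a⟩⟩
    obtain ⟨g, hg⟩ := (F i).orbit_mk_eq_iff.mp (Quot.out_eq (Quot.mk (F i).OrbitRel a))
    exact ⟨⟨i, Quot.mk _ a⟩, Quot.sound ⟨g, congrArg (Sigma.mk i) hg⟩⟩

def sigmaCocone (F : Discrete ι ⥤ SmGSet G) : Cocone F where
  pt := sigma fun i => F.obj ⟨i⟩
  ι := Discrete.natTrans fun j => ⟨fun a => ⟨j.as, a⟩, fun _ _ => rfl⟩

def sigmaCoconeIsColimit (F : Discrete ι ⥤ SmGSet G) : IsColimit (sigmaCocone F) where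
  desc c := ⟨fun x => (c.ι.app ⟨x.1⟩).toFun x.2, fun g x => (c.ι.app ⟨x.1⟩).equivariant g x.2⟩
  fac _ _ := rfl
  uniq _ _ h := SmHom.ext <| funext fun ⟨i, a⟩ => congrFun (congrArg SmHom.toFun (h ⟨i⟩)) a

end Coproducts

section Quotients

variable [SeparatelyContinuousMul G]

def quotient (M : SmGSet G) (r : M.α → M.α → Prop)
    (hr : ∀ (g : G) (x y : M.α), r x y → r (M.smul g x) (M.smul g y)) : SmGSet G where
  α := Quot r
  smul g := Quot.map (M.smul g) (hr g)
  one_smul := by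
    rintro ⟨x⟩
    exact congrArg (Quot.mk r) (M.one_smul x)
  mul_smul g h := by
    rintro ⟨x⟩
    exact congrArg (Quot.mk r) (M.mul_smul g h x)
  smooth := by
    rintro ⟨x⟩
    let S : Subgroup G :=
      { carrier := {g | Quot.mk r (M.smul g x) = Quot.mk r x}
        one_mem' := congrArg (Quot.mk r) (M.one_smul x)
        mul_mem' := fun {a b} (ha : Quot.mk r _ = _) (hb : Quot.mk r _ = _) =>
          show Quot.mk r (M.smul (a * b) x) = _ by
            rw [M.mul_smul, ← ha]
            exact congrArg (Quot.map (M.smul a) (hr a)) hb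
        inv_mem' := fun {a} (ha : Quot.mk r _ = _) =>
          show Quot.mk r (M.smul a⁻¹ x) = _ by
            conv_rhs => rw [← M.inv_smul_smul a x]
            exact (congrArg (Quot.map (M.smul a⁻¹) (hr a⁻¹)) ha).symm }
    exact Subgroup.isOpen_mono (H₁ := M.stab x) (H₂ := S)
      (fun g (hg : M.smul g x = x) => congrArg (Quot.mk r) hg) (M.stab_isOpen x)
  finitary := by
    refine Finite.of_surjective (fun q : M.Orbits => Quot.mk _ (Quot.mk r q.out)) ?_
    rintro ⟨⟨x⟩⟩
    obtain ⟨g, hg⟩ := M.orbit_mk_eq_iff.mp (Quot.out_eq (Quot.mk M.OrbitRel x))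
    exact ⟨Quot.mk _ x, Quot.sound ⟨g, congrArg (Quot.mk r) hg⟩⟩

def quotientMk (M : SmGSet G) (r : M.α → M.α → Prop)
    (hr : ∀ (g : G) (x y : M.α), r x y → r (M.smul g x) (M.smul g y)) : M ⟶ M.quotient r hr :=
  ⟨Quot.mk r, fun _ _ => rfl⟩

theorem isTransitive_quotient {M : SmGSet G} (hM : IsTransitive M) (r : M.α → M.α → Prop)
    (hr : ∀ (g : G) (x y : M.α), r x y → r (M.smul g x) (M.smul g y)) :
    IsTransitive (M.quotient r hr) := by
  obtain ⟨⟨x₀⟩, hM⟩ := hM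
  refine ⟨⟨Quot.mk r x₀⟩, ?_⟩
  rintro ⟨x⟩ ⟨y⟩
  obtain ⟨g, hg⟩ := hM x y
  exact ⟨g, congrArg (Quot.mk r) hg⟩

theorem quotientMk_eq_iff (M : SmGSet G) {r : M.α → M.α → Prop} (he : Equivalence r)
    (hr : ∀ (g : G) (x y : M.α), r x y → r (M.smul g x) (M.smul g y)) (x y : M.α) :
    (M.quotientMk r hr).toFun x = (M.quotientMk r hr).toFun y ↔ r x y :=
  ⟨fun h => he.eqvGen_iff.mp (Quot.eq.mp h), fun h => Quot.sound h⟩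

end Quotients

section Partitions

variable {ι : Type} (M : SmGSet G) (A : ι → Set M.α) (hA : ∀ i, M.IsInvariant (A i))

def partitionCocone : Cocone (Discrete.functor fun i => M.sub (A i) (hA i)) where
  pt := M
  ι := Discrete.natTrans fun j => M.subι (A j.as) (hA j.as)

variable {M A} in
noncomputable def partitionCoconeIsColimit (hpart : ∀ x, ∃! i, x ∈ A i) :
    IsColimit (partitionCocone M A hA) :=
  let idx (x : M.α) : ι := (hpart x).exists.choose
  have mem_idx (x : M.α) : x ∈ A (idx x) := (hpart x).exists.choose_spec
  have desc_eq (c : Cocone (Discrete.functor fun i => M.sub (A i) (hA i))) (x : M.α) (i : ι)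
      (hx : x ∈ A i) : (c.ι.app ⟨idx x⟩).toFun ⟨x, mem_idx x⟩ = (c.ι.app ⟨i⟩).toFun ⟨x, hx⟩ := by
    obtain rfl := (hpart x).unique (mem_idx x) hx
    rfl
  { desc c := ⟨fun x => (c.ι.app ⟨idx x⟩).toFun ⟨x, mem_idx x⟩, fun g (x : M.α) =>
      (desc_eq c (M.smul g x) (idx x) (hA _ g x (mem_idx x))).trans
        ((c.ι.app ⟨idx x⟩).equivariant g ⟨x, mem_idx x⟩)⟩
    fac c j := SmHom.ext <| funext fun a => desc_eq c a.1 j.as a.2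
    uniq _ _ h := SmHom.ext <| funext fun x =>
      congrFun (congrArg SmHom.toFun (h ⟨idx x⟩)) ⟨x, mem_idx x⟩ }

end Partitions

section Exact

variable {K : Type} [Group K] [TopologicalSpace K] (T : SmGSet G ⥤ SmGSet K)

theorem map_comp_toFun {A B C : SmGSet G} (f : A ⟶ B) (g : B ⟶ C) (x : (T.obj A).α) :
    (T.map (f ≫ g)).toFun x = (T.map g).toFun ((T.map f).toFun x) := by
  rw [T.map_comp]; rfl

theorem map_id_toFun (A : SmGSet G) (x : (T.obj A).α) : (T.map (𝟙 A)).toFun x = x := by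
  rw [T.map_id]; rfl

theorem map_dprod_bijective [PreservesFiniteProducts T] (hrG : RoelckePrecompact G)
    (hrK : RoelckePrecompact K) (A B : SmGSet G) :
    Function.Bijective fun m : (T.obj (dprod A B hrG)).α =>
      ((T.map (dprodFst hrG A B)).toFun m, (T.map (dprodSnd hrG A B)).toFun m) := by
  let F : Discrete WalkingPair ⥤ SmGSet G := pair A B
  have hT := isLimitOfPreserves T (dprodConeIsLimit hrG F)
  have hK := dprodConeIsLimit hrK (F ⋙ T)
  let e := IsLimit.conePointUniqueUpToIso hT hK
  have he : ∀ j m, ((dprodCone hrK (F ⋙ T)).π.app j).toFun (e.hom.toFun m)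
      = (T.map ((dprodCone hrG F).π.app j)).toFun m := fun j m =>
    congrFun (congrArg SmHom.toFun (IsLimit.conePointUniqueUpToIso_hom_comp hT hK j)) m
  have h : (fun m : (T.obj (dprod A B hrG)).α =>
      ((T.map (dprodFst hrG A B)).toFun m, (T.map (dprodSnd hrG A B)).toFun m)) = e.hom.toFun :=
    funext fun m => Prod.ext (he ⟨.left⟩ m).symm (he ⟨.right⟩ m).symm
  rw [h]
  exact bijective_hom e

theorem map_partition_bijective [PreservesFiniteCoproducts T] {ι : Type} [Finite ι]
    (M : SmGSet G) (A : ι → Set M.α) (hA : ∀ i, M.IsInvariant (A i))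
    (hpart : ∀ x, ∃! i, x ∈ A i) :
    Function.Bijective fun a : Σ i, (T.obj (M.sub (A i) (hA i))).α =>
      (T.map (M.subι (A a.1) (hA a.1))).toFun a.2 := by
  let F := Discrete.functor fun i => M.sub (A i) (hA i)
  have hσ := sigmaCoconeIsColimit (F ⋙ T)
  have hT := isColimitOfPreserves T (partitionCoconeIsColimit hA hpart)
  let e := IsColimit.coconePointUniqueUpToIso hσ hT
  have h : (fun a : Σ i, (T.obj (M.sub (A i) (hA i))).α =>
      (T.map (M.subι (A a.1) (hA a.1))).toFun a.2) = e.hom.toFun := funext fun ⟨i, a⟩ =>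
    (congrFun (congrArg SmHom.toFun (IsColimit.comp_coconePointUniqueUpToIso_hom hσ hT ⟨i⟩)) a).symm
  rw [h]
  exact bijective_hom e

theorem map_toFun_ne [PreservesFiniteProducts T] [PreservesFiniteCoproducts T]
    (hrG : RoelckePrecompact G) (hrK : RoelckePrecompact K) {A B : SmGSet G} (u v : A ⟶ B)
    (h : ∀ a, u.toFun a ≠ v.toFun a) (m : (T.obj A).α) :
    (T.map u).toFun m ≠ (T.map v).toFun m := by
  classical
  intro huv
  -- `B × B` is the disjoint union of the diagonal `D true` and its complement `D false`; if
  -- `T u m = T v m`, then `T` of both parts would contain the point `(T u m, T v m)`.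
  let D (b : Bool) : Set (dprod B B hrG).α := {z | decide (z.1 = z.2) = b}
  have hD : ∀ b, (dprod B B hrG).IsInvariant (D b) := fun b g z (hz : decide _ = b) =>
    show decide (B.smul g z.1 = B.smul g z.2) = b by rwa [(B.smul_injective g).eq_iff]
  have hpart : ∀ z, ∃! b, z ∈ D b := fun z => ⟨_, rfl, fun _ hb => hb.symm⟩
  let ιD (b : Bool) := (dprod B B hrG).subι (D b) (hD b)
  let δ : B ⟶ (dprod B B hrG).sub (D true) (hD true) :=
    ⟨fun x => ⟨(x, x), decide_eq_true rfl⟩, fun _ _ => rfl⟩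
  let ε : A ⟶ (dprod B B hrG).sub (D false) (hD false) :=
    ⟨fun a => ⟨(u.toFun a, v.toFun a), decide_eq_false (h a)⟩,
      fun g a => Subtype.ext (Prod.ext (u.equivariant g a) (v.equivariant g a))⟩
  have key : (T.map (u ≫ δ ≫ ιD true)).toFun m = (T.map (ε ≫ ιD false)).toFun m := by
    refine (map_dprod_bijective T hrG hrK B B).1 (Prod.ext ?_ ?_) <;> dsimp only <;>
      rw [← map_comp_toFun, ← map_comp_toFun]
    exacts [rfl, huv]
  have hσ := (map_partition_bijective T (dprod B B hrG) D hD hpart).1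
    (a₁ := ⟨true, (T.map (u ≫ δ)).toFun m⟩) (a₂ := ⟨false, (T.map ε).toFun m⟩)
    (by dsimp only; rwa [← map_comp_toFun, ← map_comp_toFun, Category.assoc])
  exact Bool.noConfusion (congrArg Sigma.fst hσ)

end Exact

section Pieces

variable {K : Type} [Group K] [TopologicalSpace K] (T : SmGSet G ⥤ SmGSet K)
  (hr : RoelckePrecompact G) (M : SmGSet G)

def piece (x x' : M.α) : Set ((T.obj M).α × (T.obj M).α) :=
  Set.range fun m : (T.obj ((dprod M M hr).orbitObj (Quot.mk _ (x, x')))).α =>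
    ((T.map ((dprod M M hr).orbitι _ ≫ dprodFst hr M M)).toFun m,
      (T.map ((dprod M M hr).orbitι _ ≫ dprodSnd hr M M)).toFun m)

variable {M}

theorem piece_smul (g : G) (x x' : M.α) :
    piece T hr M (M.smul g x) (M.smul g x') = piece T hr M x x' := by
  unfold piece
  rw [show Quot.mk (dprod M M hr).OrbitRel (M.smul g x, M.smul g x') = Quot.mk _ (x, x') from
    (Quot.sound ⟨g, rfl⟩).symm]
  rfl

theorem map_mem_piece {N : SmGSet G} (a b : N ⟶ M) {x x' : M.α}
    (h : ∀ n, ∃ g : G, M.smul g (a.toFun n) = x ∧ M.smul g (b.toFun n) = x')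
    (n : (T.obj N).α) : ((T.map a).toFun n, (T.map b).toFun n) ∈ piece T hr M x x' := by
  let r : N ⟶ (dprod M M hr).orbitObj (Quot.mk _ (x, x')) :=
    ⟨fun n => ⟨(a.toFun n, b.toFun n), (dprod M M hr).mem_orbitClass_mk.mpr <|
      let ⟨g, h₁, h₂⟩ := h n; ⟨g, Prod.ext h₁ h₂⟩⟩,
      fun g n => Subtype.ext (Prod.ext (a.equivariant g n) (b.equivariant g n))⟩
  exact ⟨(T.map r).toFun n, by dsimp only; rw [← map_comp_toFun, ← map_comp_toFun]; rfl⟩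

theorem exists_mem_piece [PreservesFiniteProducts T] [PreservesFiniteCoproducts T]
    (hrK : RoelckePrecompact K) (w : (T.obj M).α × (T.obj M).α) :
    ∃ x x', w ∈ piece T hr M x x' := by
  obtain ⟨u, rfl⟩ := (map_dprod_bijective T hr hrK M M).2 w
  obtain ⟨⟨i, a⟩, rfl⟩ := (map_partition_bijective T (dprod M M hr) _
    (dprod M M hr).isInvariant_orbitClass fun z => ⟨_, rfl, fun _ hi => hi.symm⟩).2 u
  obtain ⟨⟨x, x'⟩, rfl⟩ := Quot.exists_rep i
  exact ⟨x, x', a, by dsimp only; rw [map_comp_toFun, map_comp_toFun]⟩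

theorem mk_mem_piece_self (hM : IsTransitive M) (x : M.α) (p : (T.obj M).α) :
    (p, p) ∈ piece T hr M x x := by
  simpa only [map_id_toFun] using
    map_mem_piece T hr (𝟙 M) (𝟙 M) (fun z => let ⟨g, hg⟩ := hM.2 z x; ⟨g, hg, hg⟩) p

theorem swap_mem_piece {x x' : M.α} {w : (T.obj M).α × (T.obj M).α}
    (hw : w ∈ piece T hr M x x') : w.swap ∈ piece T hr M x' x := by
  obtain ⟨m, rfl⟩ := hw
  refine map_mem_piece T hr _ _ (fun z => ?_) m
  obtain ⟨g, hg⟩ := (dprod M M hr).mem_orbitClass_mk.mp z.2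
  exact ⟨g, congrArg Prod.snd hg, congrArg Prod.fst hg⟩

theorem exists_mem_piece_triple (x x' x'' : M.α) (n : (T.obj ((dprod (dprod M M hr) M hr).orbitObj
      (Quot.mk _ ((x, x'), x'')))).α) :
    ∃ p₁ p₂ p₃ : (T.obj M).α, (p₁, p₂) ∈ piece T hr M x x' ∧ (p₁, p₃) ∈ piece T hr M x x'' ∧
      (p₂, p₃) ∈ piece T hr M x' x'' := by
  let ι₃ := (dprod (dprod M M hr) M hr).orbitι (Quot.mk _ ((x, x'), x''))
  have hmem : ∀ z, ∃ g : G, M.smul g (ι₃.toFun z).1.1 = x ∧ M.smul g (ι₃.toFun z).1.2 = x' ∧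
      M.smul g (ι₃.toFun z).2 = x'' := fun z => by
    obtain ⟨g, hg⟩ := (dprod (dprod M M hr) M hr).mem_orbitClass_mk.mp z.2
    exact ⟨g, congrArg (·.1.1) hg, congrArg (·.1.2) hg, congrArg Prod.snd hg⟩
  let π₁ := ι₃ ≫ dprodFst hr _ M ≫ dprodFst hr M M
  let π₂ := ι₃ ≫ dprodFst hr _ M ≫ dprodSnd hr M M
  let π₃ := ι₃ ≫ dprodSnd hr _ M
  refine ⟨(T.map π₁).toFun n, (T.map π₂).toFun n, (T.map π₃).toFun n, ?_, ?_, ?_⟩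
  · exact map_mem_piece T hr π₁ π₂ (fun z => let ⟨g, h₁, h₂, _⟩ := hmem z; ⟨g, h₁, h₂⟩) n
  · exact map_mem_piece T hr π₁ π₃ (fun z => let ⟨g, h₁, _, h₃⟩ := hmem z; ⟨g, h₁, h₃⟩) n
  · exact map_mem_piece T hr π₂ π₃ (fun z => let ⟨g, _, h₂, h₃⟩ := hmem z; ⟨g, h₂, h₃⟩) n

theorem map_toFun_eq_iff_of_mem_piece [PreservesFiniteProducts T] [PreservesFiniteCoproducts T]
    (hrK : RoelckePrecompact K) {M' : SmGSet G} (p : M ⟶ M') {x x' : M.α}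
    {w : (T.obj M).α × (T.obj M).α} (hw : w ∈ piece T hr M x x') :
    (T.map p).toFun w.1 = (T.map p).toFun w.2 ↔ p.toFun x = p.toFun x' := by
  let ι₂ := (dprod M M hr).orbitι (Quot.mk _ (x, x'))
  have horbit : ∀ z, p.toFun (ι₂.toFun z).1 = p.toFun (ι₂.toFun z).2 ↔ p.toFun x = p.toFun x' :=
    fun z => by
      obtain ⟨g, hg⟩ := (dprod M M hr).mem_orbitClass_mk.mp z.2
      have h₁ : M.smul g (ι₂.toFun z).1 = x := congrArg Prod.fst hg
      have h₂ : M.smul g (ι₂.toFun z).2 = x' := congrArg Prod.snd hg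
      calc p.toFun (ι₂.toFun z).1 = p.toFun (ι₂.toFun z).2
          ↔ M'.smul g (p.toFun (ι₂.toFun z).1) = M'.smul g (p.toFun (ι₂.toFun z).2) :=
            (M'.smul_injective g).eq_iff.symm
        _ ↔ p.toFun x = p.toFun x' := by rw [← p.equivariant, ← p.equivariant, h₁, h₂]
  obtain ⟨m, rfl⟩ := hw
  dsimp only
  rw [← map_comp_toFun, ← map_comp_toFun]
  constructor
  · intro h
    by_contra hne
    exact map_toFun_ne T hr hrK _ _ (fun z => (horbit z).not.mpr hne) m h
  · intro h
    rw [show (ι₂ ≫ dprodFst hr M M) ≫ p = (ι₂ ≫ dprodSnd hr M M) ≫ p from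
      SmHom.ext (funext fun z => (horbit z).mpr h)]

end Pieces

section Split

variable {H : Type} [Group H] [TopologicalSpace H]

theorem isTransitive_eprod {X : SmGSet G} {Y : SmGSet H} (hX : IsTransitive X)
    (hY : IsTransitive Y) : IsTransitive (eprod X Y) := by
  obtain ⟨⟨x⟩, hX⟩ := hX
  obtain ⟨⟨y⟩, hY⟩ := hY
  refine ⟨⟨(x, y)⟩, fun u v => ?_⟩
  obtain ⟨g, hg⟩ := hX u.1 v.1
  obtain ⟨h, hh⟩ := hY u.2 v.2
  exact ⟨(g, h), Prod.ext hg hh⟩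

theorem exists_eq_prodMap_of_eprod {X X' : SmGSet G} {Y Y' : SmGSet H} (hX : IsTransitive X)
    (hY : IsTransitive Y) (κ : eprod X Y ⟶ eprod X' Y') :
    ∃ (p : X ⟶ X') (q : Y ⟶ Y'), ∀ u, κ.toFun u = (p.toFun u.1, q.toFun u.2) := by
  obtain ⟨⟨x₀⟩, hX⟩ := hX
  obtain ⟨⟨y₀⟩, hY⟩ := hY
  have hfst : ∀ x y y', (κ.toFun (x, y)).1 = (κ.toFun (x, y')).1 := fun x y y' => by
    obtain ⟨h, rfl⟩ := hY y y'
    calc (κ.toFun (x, y)).1 = X'.smul 1 (κ.toFun (x, y)).1 := (X'.one_smul _).symm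
      _ = (κ.toFun (X.smul 1 x, Y.smul h y)).1 :=
        congrArg Prod.fst (κ.equivariant (1, h) (x, y)).symm
      _ = (κ.toFun (x, Y.smul h y)).1 := by rw [X.one_smul]
  have hsnd : ∀ x x' y, (κ.toFun (x, y)).2 = (κ.toFun (x', y)).2 := fun x x' y => by
    obtain ⟨g, rfl⟩ := hX x x'
    calc (κ.toFun (x, y)).2 = Y'.smul 1 (κ.toFun (x, y)).2 := (Y'.one_smul _).symm
      _ = (κ.toFun (X.smul g x, Y.smul 1 y)).2 :=
        congrArg Prod.snd (κ.equivariant (g, 1) (x, y)).symm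
      _ = (κ.toFun (X.smul g x, y)).2 := by rw [Y.one_smul]
  refine ⟨⟨fun x => (κ.toFun (x, y₀)).1, fun g x => ?_⟩,
    ⟨fun y => (κ.toFun (x₀, y)).2, fun h y => ?_⟩, fun u => Prod.ext (hfst _ _ _) (hsnd _ _ _)⟩
  · rw [hfst _ y₀ (Y.smul 1 y₀)]
    exact congrArg Prod.fst (κ.equivariant (g, 1) (x, y₀))
  · rw [hsnd x₀ (X.smul 1 x₀)]
    exact congrArg Prod.snd (κ.equivariant (1, h) (x₀, y))

theorem exists_quotients_of_equivalence [ContinuousMul G] [ContinuousMul H]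
    (hsplit : ∀ W : SmGSet (G × H), IsTransitive W → ∃ (X : SmGSet G) (Y : SmGSet H),
      IsTransitive X ∧ IsTransitive Y ∧ Nonempty (W ≅ eprod X Y))
    {X : SmGSet G} {Y : SmGSet H} (hX : IsTransitive X) (hY : IsTransitive Y)
    (r : X.α × Y.α → X.α × Y.α → Prop) (he : Equivalence r)
    (hr : ∀ (g : G × H) (u v : X.α × Y.α), r u v →
      r ((eprod X Y).smul g u) ((eprod X Y).smul g v)) :
    ∃ (X' : SmGSet G) (p : X ⟶ X') (Y' : SmGSet H) (q : Y ⟶ Y'),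
      IsTransitive X' ∧ IsTransitive Y' ∧ Function.Surjective p.toFun ∧
        Function.Surjective q.toFun ∧
          ∀ u v, r u v ↔ p.toFun u.1 = p.toFun v.1 ∧ q.toFun u.2 = q.toFun v.2 := by
  obtain ⟨X', Y', hX', hY', ⟨e⟩⟩ := hsplit _ (isTransitive_quotient (isTransitive_eprod hX hY) r hr)
  obtain ⟨p, q, hκ⟩ := exists_eq_prodMap_of_eprod hX hY ((eprod X Y).quotientMk r hr ≫ e.hom)
  refine ⟨X', p, Y', q, hX', hY', surjective_of_isTransitive p hX.1 hX',
    surjective_of_isTransitive q hY.1 hY', fun u v => ?_⟩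
  rw [← quotientMk_eq_iff (eprod X Y) he hr u v, ← (bijective_hom e).1.eq_iff]
  exact (Eq.congr (hκ u) (hκ v)).trans Prod.ext_iff

end Split

section Kernel

variable {H K : Type} [Group H] [TopologicalSpace H] [Group K] [TopologicalSpace K]
  {Φ : SmGSet G ⥤ SmGSet K} {Ψ : SmGSet H ⥤ SmGSet K}
  {hrK : RoelckePrecompact K} {X : SmGSet G} {Y : SmGSet H} {Z : SmGSet K}

def KernelRel (hrG : RoelckePrecompact G) (hrH : RoelckePrecompact H)
    (f : dprod (Φ.obj X) (Ψ.obj Y) hrK ⟶ Z) (u v : X.α × Y.α) : Prop :=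
  ∃ w ∈ piece Φ hrG X u.1 v.1, ∃ w' ∈ piece Ψ hrH Y u.2 v.2,
    f.toFun (w.1, w'.1) = f.toFun (w.2, w'.2)

variable (hrG : RoelckePrecompact G) (hrH : RoelckePrecompact H)
  (htrans : ∀ (X : SmGSet G) (Y : SmGSet H), IsTransitive X → IsTransitive Y →
    IsTransitive (dprod (Φ.obj X) (Ψ.obj Y) hrK))
  (f : dprod (Φ.obj X) (Ψ.obj Y) hrK ⟶ Z)

include htrans in
/-- Each product of pieces is a single `K`-orbit, so it lies either inside the kernel of `f` or
outside it. -/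
theorem KernelRel.eq_of_mem_piece {u v : X.α × Y.α} (huv : KernelRel hrG hrH f u v)
    {w : (Φ.obj X).α × (Φ.obj X).α} {w' : (Ψ.obj Y).α × (Ψ.obj Y).α}
    (hw : w ∈ piece Φ hrG X u.1 v.1) (hw' : w' ∈ piece Ψ hrH Y u.2 v.2) :
    f.toFun (w.1, w'.1) = f.toFun (w.2, w'.2) := by
  obtain ⟨_, ⟨m₀, rfl⟩, _, ⟨n₀, rfl⟩, h₀⟩ := huv
  obtain ⟨m, rfl⟩ := hw
  obtain ⟨n, rfl⟩ := hw'
  let ι := (dprod X X hrG).orbitι (Quot.mk _ (u.1, v.1))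
  let ι' := (dprod Y Y hrH).orbitι (Quot.mk _ (u.2, v.2))
  exact toFun_eq_of_isTransitive
    (htrans _ _ (isTransitive_orbitObj _ _) (isTransitive_orbitObj _ _))
    (dprodMap hrK (Φ.map (ι ≫ dprodFst hrG X X)) (Ψ.map (ι' ≫ dprodFst hrH Y Y)) ≫ f)
    (dprodMap hrK (Φ.map (ι ≫ dprodSnd hrG X X)) (Ψ.map (ι' ≫ dprodSnd hrH Y Y)) ≫ f)
    (a₀ := (m₀, n₀)) h₀ (m, n)

include htrans in
theorem KernelRel.equivalence (hX : IsTransitive X) (hY : IsTransitive Y) :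
    Equivalence (KernelRel hrG hrH f) where
  refl u := by
    obtain ⟨⟨p, q⟩⟩ := (htrans X Y hX hY).1
    exact ⟨(p, p), mk_mem_piece_self Φ hrG hX u.1 p, (q, q), mk_mem_piece_self Ψ hrH hY u.2 q, rfl⟩
  symm := fun ⟨w, hw, w', hw', h⟩ =>
    ⟨w.swap, swap_mem_piece Φ hrG hw, w'.swap, swap_mem_piece Ψ hrH hw', h.symm⟩
  trans {u v t} huv hvt := by
    obtain ⟨⟨m, n⟩⟩ := (htrans _ _
      (isTransitive_orbitObj (dprod (dprod X X hrG) X hrG) (Quot.mk _ ((u.1, v.1), t.1)))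
      (isTransitive_orbitObj (dprod (dprod Y Y hrH) Y hrH) (Quot.mk _ ((u.2, v.2), t.2)))).1
    obtain ⟨p₁, p₂, p₃, hp₁₂, hp₁₃, hp₂₃⟩ := exists_mem_piece_triple Φ hrG u.1 v.1 t.1 m
    obtain ⟨q₁, q₂, q₃, hq₁₂, hq₁₃, hq₂₃⟩ := exists_mem_piece_triple Ψ hrH u.2 v.2 t.2 n
    exact ⟨(p₁, p₃), hp₁₃, (q₁, q₃), hq₁₃, (huv.eq_of_mem_piece hrG hrH htrans f hp₁₂ hq₁₂).trans
      (hvt.eq_of_mem_piece hrG hrH htrans f hp₂₃ hq₂₃)⟩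

theorem KernelRel.smul (g : G × H) {u v : X.α × Y.α} (huv : KernelRel hrG hrH f u v) :
    KernelRel hrG hrH f ((eprod X Y).smul g u) ((eprod X Y).smul g v) := by
  show ∃ w ∈ piece Φ hrG X (X.smul g.1 u.1) (X.smul g.1 v.1),
    ∃ w' ∈ piece Ψ hrH Y (Y.smul g.2 u.2) (Y.smul g.2 v.2),
      f.toFun (w.1, w'.1) = f.toFun (w.2, w'.2)
  rwa [piece_smul, piece_smul]

include htrans in
theorem toFun_eq_iff_of_kernelRel_iff [PreservesFiniteProducts Φ] [PreservesFiniteCoproducts Φ]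
    [PreservesFiniteProducts Ψ] [PreservesFiniteCoproducts Ψ] {X' : SmGSet G} {Y' : SmGSet H}
    (p : X ⟶ X') (q : Y ⟶ Y')
    (hpq : ∀ u v, KernelRel hrG hrH f u v ↔ p.toFun u.1 = p.toFun v.1 ∧ q.toFun u.2 = q.toFun v.2)
    (a b : (dprod (Φ.obj X) (Ψ.obj Y) hrK).α) :
    f.toFun a = f.toFun b ↔ (dprodMap hrK (Φ.map p) (Ψ.map q)).toFun a =
      (dprodMap hrK (Φ.map p) (Ψ.map q)).toFun b := by
  obtain ⟨x, x', hx⟩ := exists_mem_piece Φ hrG hrK (a.1, b.1)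
  obtain ⟨y, y', hy⟩ := exists_mem_piece Ψ hrH hrK (a.2, b.2)
  calc f.toFun a = f.toFun b ↔ KernelRel hrG hrH f (x, y) (x', y') :=
        ⟨fun h => ⟨_, hx, _, hy, h⟩, fun h => h.eq_of_mem_piece hrG hrH htrans f hx hy⟩
    _ ↔ p.toFun x = p.toFun x' ∧ q.toFun y = q.toFun y' := hpq _ _
    _ ↔ (Φ.map p).toFun a.1 = (Φ.map p).toFun b.1 ∧ (Ψ.map q).toFun a.2 = (Ψ.map q).toFun b.2 :=
      (map_toFun_eq_iff_of_mem_piece Φ hrG hrK p hx).symm.and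
        (map_toFun_eq_iff_of_mem_piece Ψ hrH hrK q hy).symm
    _ ↔ _ := (Prod.ext_iff (x := (dprodMap hrK (Φ.map p) (Ψ.map q)).toFun a)
      (y := (dprodMap hrK (Φ.map p) (Ψ.map q)).toFun b)).symm

end Kernel

end SmGSet

open SmGSet in
/-- Let `G, H, K` be pro-oligomorphic groups, with `G` split (every
transitive object of `S(G × H′)` is an external product of transitive sets, for every
pro-oligomorphic `H′`). Let `Φ : S(G) → S(K)` and `Ψ : S(H) → S(K)` be exact functors
such that `Φ(X) × Ψ(Y)` is transitive whenever `X`, `Y` are transitive. Let `X` be a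
transitive `G`-set, `Y` a transitive `H`-set, and `Z` an object of `S(K)` admitting a
surjective morphism `Φ(X) × Ψ(Y) → Z`. Then there are quotients `X′` of `X` and `Y′` of
`Y` with `Z ≅ Φ(X′) × Ψ(Y′)`. -/
theorem stmt_17 {G H K : Type}
    [Group G] [TopologicalSpace G] [IsTopologicalGroup G]
    [Group H] [TopologicalSpace H] [IsTopologicalGroup H]
    [Group K] [TopologicalSpace K] [IsTopologicalGroup K]
    (hG : IsProOligomorphic G) (hH : IsProOligomorphic H) (hK : IsProOligomorphic K)
    (hsplit : ∀ (H' : Type) [Group H'] [TopologicalSpace H'] [IsTopologicalGroup H'],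
      IsProOligomorphic H' → ∀ W : SmGSet (G × H'), IsTransitive W →
        ∃ (X : SmGSet G) (Y : SmGSet H'),
          IsTransitive X ∧ IsTransitive Y ∧ Nonempty (W ≅ eprod X Y))
    (Φ : SmGSet G ⥤ SmGSet K) (Ψ : SmGSet H ⥤ SmGSet K)
    (hΦ₁ : Limits.PreservesFiniteLimits Φ) (hΦ₂ : Limits.PreservesFiniteColimits Φ)
    (hΨ₁ : Limits.PreservesFiniteLimits Ψ) (hΨ₂ : Limits.PreservesFiniteColimits Ψ)
    (htrans : ∀ (X : SmGSet G) (Y : SmGSet H), IsTransitive X → IsTransitive Y →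
      IsTransitive (dprod (Φ.obj X) (Ψ.obj Y) hK.roelcke))
    (X : SmGSet G) (hX : IsTransitive X) (Y : SmGSet H) (hY : IsTransitive Y)
    (Z : SmGSet K) (f : dprod (Φ.obj X) (Ψ.obj Y) hK.roelcke ⟶ Z)
    (hf : Function.Surjective (SmHom.toFun f)) :
    ∃ (X' : SmGSet G) (p : X ⟶ X') (Y' : SmGSet H) (q : Y ⟶ Y'),
      Function.Surjective (SmHom.toFun p) ∧ Function.Surjective (SmHom.toFun q) ∧
        Nonempty (Z ≅ dprod (Φ.obj X') (Ψ.obj Y') hK.roelcke) := by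
  obtain ⟨X', p, Y', q, hX', hY', hp, hq, hpq⟩ :=
    exists_quotients_of_equivalence (hsplit H hH) hX hY (KernelRel hG.roelcke hH.roelcke f)
      (KernelRel.equivalence hG.roelcke hH.roelcke htrans f hX hY)
      (fun g _ _ => KernelRel.smul hG.roelcke hH.roelcke f g)
  refine ⟨X', p, Y', q, hp, hq, nonempty_iso_of_toFun_eq_iff f hf _ ?_
    (toFun_eq_iff_of_kernelRel_iff hG.roelcke hH.roelcke htrans f p q hpq)⟩
  exact surjective_of_isTransitive _ (htrans X Y hX hY).1 (htrans X' Y' hX' hY')
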